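/- arXiv:1808.10216 — 5 statements merged into one kernel-verified Lean document; each statement's English description precedes it below -/
import Mathlib

section
/- The first canonical connection ∇⁰ of a (J²=±1)-metric manifold, defined by ∇⁰_X Y = ∇ᵍ_X Y + (-α/2)(∇ᵍ_X J)(JY), satisfies ∇⁰J = 0 and ∇⁰g = 0. -/
/- Abstract algebraic model of a `(J² = ±1)`-metric manifold:
`V` plays the role of the module of (smooth) vector fields (an `ℝ`-vector space),
`F` plays the role of the ring of smooth functions (an `ℝ`-algebra),
`g : V →ₗ[ℝ] V →ₗ[ℝ] F` the metric, `J : V →ₗ[ℝ] V` the almost (para)complex/product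
structure, `nabla : V → V →ₗ[ℝ] V` the Levi-Civita connection, `Xact X : F →ₗ[ℝ] F`
the action of the vector field `X` on functions (`Xact X f = X f`), and
`bracket` the Lie bracket of vector fields. -/

variable {V : Type*} [AddCommGroup V] [Module ℝ V]

/-- The covariant derivative `(∇_X J) Y = ∇_X (J Y) - J (∇_X Y)`. -/
def nablaJ (nabla : V → V →ₗ[ℝ] V) (J : V →ₗ[ℝ] V) (X Y : V) : V :=
  nabla X (J Y) - J (nabla X Y)

/-- The first canonical connection `∇⁰_X Y = ∇_X Y + (-α/2) • (∇_X J)(J Y)`. -/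
noncomputable def canon (α : ℝ) (nabla : V → V →ₗ[ℝ] V) (J : V →ₗ[ℝ] V) (X Y : V) : V :=
  nabla X Y - (α / 2) • nablaJ nabla J X (J Y)

/-- The torsion `T⁰(X,Y) = ∇⁰_X Y - ∇⁰_Y X - [X,Y]` of the first canonical connection. -/
noncomputable def torsion0 (α : ℝ) (nabla : V → V →ₗ[ℝ] V) (J : V →ₗ[ℝ] V)
    (bracket : V → V → V) (X Y : V) : V :=
  canon α nabla J X Y - canon α nabla J Y X - bracket X Y

/-- The Nijenhuis tensor of `J`, expressed through the Levi-Civita connection: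
`N_J(X,Y) = (∇_X J)(JY) + (∇_{JX} J)Y - (∇_Y J)(JX) - (∇_{JY} J)X`. -/
def nijenhuis (nabla : V → V →ₗ[ℝ] V) (J : V →ₗ[ℝ] V) (X Y : V) : V :=
  nablaJ nabla J X (J Y) + nablaJ nabla J (J X) Y
    - nablaJ nabla J Y (J X) - nablaJ nabla J (J Y) X

section CanonicalConnection

variable {F : Type*} [AddCommGroup F] [Module ℝ F] {α ε : ℝ} {J : V →ₗ[ℝ] V}
  {nabla : V → V →ₗ[ℝ] V}

/-- Differentiating `J ∘ J = α • id` shows that `∇_X J` anticommutes with `J`. -/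
theorem nablaJ_apply_J (hJ2 : ∀ x, J (J x) = α • x) (X Y : V) :
    nablaJ nabla J X (J Y) = -J (nablaJ nabla J X Y) := by
  simp only [nablaJ, hJ2, map_sub, map_smul]
  abel

theorem canon_apply_J (hα : α * α = 1) (hJ2 : ∀ x, J (J x) = α • x) (X Y : V) :
    canon α nabla J X (J Y) = J (canon α nabla J X Y) := by
  rw [canon, canon, nablaJ_apply_J hJ2 X (J Y), nablaJ_apply_J hJ2 X Y, map_sub, map_smul,
    map_neg, hJ2, neg_neg, nablaJ]
  match_scalars
  · linear_combination -hα
  · linear_combination hα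

theorem smul_apply_J_left {g : V →ₗ[ℝ] V →ₗ[ℝ] F} (hJ2 : ∀ x, J (J x) = α • x)
    (hJg : ∀ x y, g (J x) (J y) = ε • g x y) (u w : V) :
    α • g (J u) w = ε • g u (J w) := by
  rw [← hJg u (J w), hJ2, map_smul]

theorem smul_apply_J_right {g : V →ₗ[ℝ] V →ₗ[ℝ] F} (hJ2 : ∀ x, J (J x) = α • x)
    (hJg : ∀ x y, g (J x) (J y) = ε • g x y) (u w : V) :
    α • g u (J w) = ε • g (J u) w := by
  rw [← hJg (J u) w, hJ2, map_smul, LinearMap.smul_apply]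

/-- Differentiate `g (J A) (J B) = ε • g A B` along the metric connection `∇`. -/
theorem nablaJ_skew_of_compat {g : V →ₗ[ℝ] V →ₗ[ℝ] F}
    (hJg : ∀ x y, g (J x) (J y) = ε • g x y) (Xact : V → F →ₗ[ℝ] F)
    (hcompat : ∀ X Y Z : V, Xact X (g Y Z) = g (nabla X Y) Z + g Y (nabla X Z))
    (X A B : V) :
    g (nablaJ nabla J X A) (J B) + g (J A) (nablaJ nabla J X B) = 0 := by
  have hdiff := congrArg (Xact X) (hJg A B)
  rw [map_smul, hcompat, hcompat, smul_add, ← hJg, ← hJg] at hdiff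
  simp only [nablaJ, map_sub, LinearMap.sub_apply]
  linear_combination (norm := module) hdiff

theorem canon_metric {g : V →ₗ[ℝ] V →ₗ[ℝ] F} (hJ2 : ∀ x, J (J x) = α • x)
    (hJg : ∀ x y, g (J x) (J y) = ε • g x y) (Xact : V → F →ₗ[ℝ] F)
    (hcompat : ∀ X Y Z : V, Xact X (g Y Z) = g (nabla X Y) Z + g Y (nabla X Z))
    (X Y Z : V) :
    Xact X (g Y Z) = g (canon α nabla J X Y) Z + g Y (canon α nabla J X Z) := by
  have hskew : α • (g (nablaJ nabla J X (J Y)) Z + g Y (nablaJ nabla J X (J Z))) = 0 := by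
    rw [nablaJ_apply_J hJ2, nablaJ_apply_J hJ2, map_neg, map_neg, LinearMap.neg_apply,
      smul_add, smul_neg, smul_neg, smul_apply_J_left hJ2 hJg, smul_apply_J_right hJ2 hJg,
      ← neg_add, ← smul_add, nablaJ_skew_of_compat hJg Xact hcompat, smul_zero, neg_zero]
  rw [hcompat, canon, canon, map_sub, LinearMap.sub_apply, map_sub, map_smul, map_smul,
    LinearMap.smul_apply]
  linear_combination (norm := module) (1 / 2 : ℝ) • hskew

end CanonicalConnection

theorem stmt6_general {F : Type*} [CommRing F] [Algebra ℝ F]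
    (α ε : ℝ) (hα : α = 1 ∨ α = -1)
    (J : V →ₗ[ℝ] V) (hJ2 : ∀ x, J (J x) = α • x)
    (g : V →ₗ[ℝ] V →ₗ[ℝ] F)
    (hJg : ∀ x y, g (J x) (J y) = ε • g x y)
    (nabla : V → V →ₗ[ℝ] V) (Xact : V → F →ₗ[ℝ] F)
    (hcompat : ∀ X Y Z : V, Xact X (g Y Z) = g (nabla X Y) Z + g Y (nabla X Z)) :
    (∀ X Y : V, canon α nabla J X (J Y) = J (canon α nabla J X Y)) ∧
      (∀ X Y Z : V,
        Xact X (g Y Z) = g (canon α nabla J X Y) Z + g Y (canon α nabla J X Z)) := by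
  have hα2 : α * α = 1 := by rcases hα with rfl | rfl <;> norm_num
  exact ⟨canon_apply_J hα2 hJ2, canon_metric hJ2 hJg Xact hcompat⟩

/-- The first canonical connection `∇⁰` satisfies `∇⁰J = 0` and `∇⁰g = 0`. -/
theorem stmt6 {F : Type*} [CommRing F] [Algebra ℝ F]
    (α ε : ℝ) (hα : α = 1 ∨ α = -1) (hε : ε = 1 ∨ ε = -1)
    (J : V →ₗ[ℝ] V) (hJ2 : ∀ x, J (J x) = α • x)
    (g : V →ₗ[ℝ] V →ₗ[ℝ] F) (hgsymm : ∀ x y, g x y = g y x)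
    (hJg : ∀ x y, g (J x) (J y) = ε • g x y)
    (nabla : V → V →ₗ[ℝ] V) (Xact : V → F →ₗ[ℝ] F)
    (hcompat : ∀ X Y Z : V, Xact X (g Y Z) = g (nabla X Y) Z + g Y (nabla X Z)) :
    (∀ X Y : V, canon α nabla J X (J Y) = J (canon α nabla J X Y)) ∧
      (∀ X Y Z : V,
        Xact X (g Y Z) = g (canon α nabla J X Y) Z + g Y (canon α nabla J X Z)) :=
  stmt6_general α ε hα J hJ2 g hJg nabla Xact hcompat
end

section
/- On a (J²=±1)-metric manifold, the Nijenhuis tensor N_J and the torsion T⁰ of the first canonical connection satisfy -½ N_J(X,Y) = T⁰(JX,JY) + α T⁰(X,Y) for all vector fields X,Y. -/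
/- For the torsion-free connection `∇` the torsion of `∇⁰` is just its correction term,
`T⁰(X,Y) = -(α/2) ((∇_X J)(JY) - (∇_Y J)(JX))`. Since `(∇_X J)` is linear and `J² = α`,
`T⁰(JX,JY) = -(α²/2) ((∇_{JX} J)Y - (∇_{JY} J)X)`, so `T⁰(JX,JY) + α T⁰(X,Y)` collects the four
terms of `N_J` with the common factor `-α²/2`, and `α² = 1`. -/

/- Abstract algebraic model of a `(J² = ±1)`-metric manifold:
`V` plays the role of the module of (smooth) vector fields (an `ℝ`-vector space),
`J : V →ₗ[ℝ] V` the almost (para)complex/product structure, `nabla : V → V →ₗ[ℝ] V`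
the Levi-Civita connection, and `bracket` the Lie bracket of vector fields. -/

variable {V : Type*} [AddCommGroup V] [Module ℝ V]

section

variable (nabla : V → V →ₗ[ℝ] V) (J : V →ₗ[ℝ] V)

theorem nablaJ_smul (X : V) (c : ℝ) (Y : V) :
    nablaJ nabla J X (c • Y) = c • nablaJ nabla J X Y := by
  simp only [nablaJ, map_smul, smul_sub]

theorem torsion0_eq_of_torsionFree (α : ℝ) (bracket : V → V → V)
    (htf : ∀ X Y : V, nabla X Y - nabla Y X = bracket X Y) (X Y : V) :
    torsion0 α nabla J bracket X Y
      = -(α / 2) • (nablaJ nabla J X (J Y) - nablaJ nabla J Y (J X)) := by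
  rw [torsion0, canon, canon, ← htf]
  module

theorem torsion0_apply_apply_add_smul_torsion0 (α : ℝ) (hJ2 : ∀ x, J (J x) = α • x)
    (bracket : V → V → V) (htf : ∀ X Y : V, nabla X Y - nabla Y X = bracket X Y) (X Y : V) :
    torsion0 α nabla J bracket (J X) (J Y) + α • torsion0 α nabla J bracket X Y
      = -(α ^ 2 / 2) • nijenhuis nabla J X Y := by
  simp only [torsion0_eq_of_torsionFree nabla J α bracket htf, hJ2, nablaJ_smul, nijenhuis]
  module

end

/-- `-½ N_J(X,Y) = T⁰(JX,JY) + α T⁰(X,Y)`. -/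
theorem stmt9 (α : ℝ) (hα : α = 1 ∨ α = -1)
    (J : V →ₗ[ℝ] V) (hJ2 : ∀ x, J (J x) = α • x)
    (nabla : V → V →ₗ[ℝ] V) (bracket : V → V → V)
    (htf : ∀ X Y : V, nabla X Y - nabla Y X = bracket X Y) :
    ∀ X Y : V,
      -((1 / 2 : ℝ) • nijenhuis nabla J X Y)
        = torsion0 α nabla J bracket (J X) (J Y)
            + α • torsion0 α nabla J bracket X Y := by
  intro X Y
  have hα2 : α ^ 2 = 1 := by rcases hα with rfl | rfl <;> norm_num
  rw [torsion0_apply_apply_add_smul_torsion0 nabla J α hJ2 bracket htf, hα2, neg_smul]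
end

section
/- Let (M,J,g) be a (J²=±1)-metric manifold with αε = 1 (almost Norden or almost product Riemannian). If (∇ᵍ_X J)Y + (∇ᵍ_Y J)X = 0 for all vector fields X,Y, then ∇ᵍJ = 0, i.e., (M,J,g) is a Kähler type manifold. -/
/- Abstract algebraic model of a `(J² = ±1)`-metric manifold:
`V` plays the role of the module of (smooth) vector fields (an `ℝ`-vector space),
`F` plays the role of the ring of smooth functions (an `ℝ`-algebra),
`g : V →ₗ[ℝ] V →ₗ[ℝ] F` the metric, `J : V →ₗ[ℝ] V` the almost (para)complex/product
structure, `nabla : V → V →ₗ[ℝ] V` the Levi-Civita connection, `Xact X : F →ₗ[ℝ] F`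
the action of the vector field `X` on functions (`Xact X f = X f`), and
`bracket` the Lie bracket of vector fields. -/

variable {V : Type*} [AddCommGroup V] [Module ℝ V]

/-! Since `αε = 1`, `J` is `g`-self-adjoint, so metric compatibility of `∇` makes
`A(X, Y, Z) = g((∇_X J) Y, Z)` symmetric in `Y, Z`, while the nearly-Kähler condition makes it
skew in `X, Y`. Alternating the two symmetries through the six orderings of `X, Y, Z` gives
`A = -A`, so `A = 0`, and nondegeneracy of `g` gives `∇J = 0`. -/

theorem eq_zero_of_swap_right_of_swap_left_neg {ι M : Type*} [AddCommGroup M]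
    [Module ℝ M] (A : ι → ι → ι → M) (hright : ∀ x y z, A x y z = A x z y)
    (hleft : ∀ x y z, A x y z = -A y x z) (x y z : ι) : A x y z = 0 := by
  have h : A x y z = -A x y z := by
    calc A x y z = A x z y := hright x y z
      _ = -A z x y := hleft x z y
      _ = -A z y x := by rw [hright z x y]
      _ = A y z x := (hleft y z x).symm
      _ = A y x z := hright y z x
      _ = -A x y z := hleft y x z
  have h2 : (2 : ℝ) • A x y z = 0 := by rw [two_smul]; nth_rewrite 2 [h]; exact add_neg_cancel _
  exact (smul_eq_zero.mp h2).resolve_left two_ne_zero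

theorem isSelfAdjoint_of_sq_eq_smul_of_apply_apply_eq_smul {M : Type*} [AddCommGroup M]
    [Module ℝ M] {α ε : ℝ} (hαα : α * α = 1) (hαε : α * ε = 1) {J : V →ₗ[ℝ] V}
    (hJ2 : ∀ x, J (J x) = α • x) {g : V →ₗ[ℝ] V →ₗ[ℝ] M}
    (hJg : ∀ x y, g (J x) (J y) = ε • g x y) : g.IsSelfAdjoint J := by
  intro x y
  have h : α • g (J x) y = ε • g x (J y) := by simpa [hJ2] using hJg x (J y)
  calc g (J x) y = (α * α) • g (J x) y := by rw [hαα, one_smul]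
    _ = (α * ε) • g x (J y) := by rw [mul_smul, h, mul_smul]
    _ = g x (J y) := by rw [hαε, one_smul]

theorem metric_nablaJ_comm {M : Type*} [AddCommGroup M] [Module ℝ M]
    {J : V →ₗ[ℝ] V} {g : V →ₗ[ℝ] V →ₗ[ℝ] M} (hgsymm : ∀ x y, g x y = g y x)
    (hJ : g.IsSelfAdjoint J) {nabla : V → V →ₗ[ℝ] V} (D : V → M → M)
    (hcompat : ∀ X Y Z, D X (g Y Z) = g (nabla X Y) Z + g Y (nabla X Z)) (X Y Z : V) :
    g (nablaJ nabla J X Y) Z = g (nablaJ nabla J X Z) Y := by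
  have hD : g (nabla X (J Y)) Z + g (J Y) (nabla X Z)
      = g (nabla X Y) (J Z) + g Y (nabla X (J Z)) := by
    rw [← hcompat, ← hcompat, hJ]
  simp only [nablaJ, map_sub, LinearMap.sub_apply]
  linear_combination (norm := module)
    hD - hJ Y (nabla X Z) - hJ (nabla X Y) Z + hgsymm Y (nabla X (J Z)) - hgsymm Y (J (nabla X Z))

theorem stmt11_general {F : Type*} [CommRing F] [Algebra ℝ F]
    (α ε : ℝ) (hα : α = 1 ∨ α = -1) (hαε : α * ε = 1)
    (J : V →ₗ[ℝ] V) (hJ2 : ∀ x, J (J x) = α • x)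
    (g : V →ₗ[ℝ] V →ₗ[ℝ] F) (hgsymm : ∀ x y, g x y = g y x)
    (hgnd : ∀ x : V, (∀ y : V, g x y = 0) → x = 0)
    (hJg : ∀ x y, g (J x) (J y) = ε • g x y)
    (nabla : V → V →ₗ[ℝ] V) (Xact : V → F →ₗ[ℝ] F)
    (hcompat : ∀ X Y Z : V, Xact X (g Y Z) = g (nabla X Y) Z + g Y (nabla X Z))
    (hnearly : ∀ X Y : V, nablaJ nabla J X Y + nablaJ nabla J Y X = 0) :
    ∀ X Y : V, nablaJ nabla J X Y = 0 := by
  have hαα : α * α = 1 := by rcases hα with rfl | rfl <;> norm_num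
  have hJ := isSelfAdjoint_of_sq_eq_smul_of_apply_apply_eq_smul hαα hαε hJ2 hJg
  have hskew : ∀ X Y Z, g (nablaJ nabla J X Y) Z = -g (nablaJ nabla J Y X) Z := fun X Y Z => by
    rw [eq_neg_of_add_eq_zero_left (hnearly X Y), map_neg, LinearMap.neg_apply]
  intro X Y
  refine hgnd _ fun Z => ?_
  exact eq_zero_of_swap_right_of_swap_left_neg (fun X Y Z => g (nablaJ nabla J X Y) Z)
    (metric_nablaJ_comm hgsymm hJ (fun X => Xact X) hcompat) hskew X Y Z

/-- If `αε = 1` and `(∇ᵍ_X J)Y + (∇ᵍ_Y J)X = 0` for all `X, Y`, the manifold is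
of Kähler type, i.e. `∇ᵍJ = 0`. -/
theorem stmt11 {F : Type*} [CommRing F] [Algebra ℝ F]
    (α ε : ℝ) (hα : α = 1 ∨ α = -1) (hε : ε = 1 ∨ ε = -1) (hαε : α * ε = 1)
    (J : V →ₗ[ℝ] V) (hJ2 : ∀ x, J (J x) = α • x)
    (g : V →ₗ[ℝ] V →ₗ[ℝ] F) (hgsymm : ∀ x y, g x y = g y x)
    (hgnd : ∀ x : V, (∀ y : V, g x y = 0) → x = 0)
    (hJg : ∀ x y, g (J x) (J y) = ε • g x y)
    (nabla : V → V →ₗ[ℝ] V) (Xact : V → F →ₗ[ℝ] F)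
    (hcompat : ∀ X Y Z : V, Xact X (g Y Z) = g (nabla X Y) Z + g Y (nabla X Z))
    (hnearly : ∀ X Y : V, nablaJ nabla J X Y + nablaJ nabla J Y X = 0) :
    ∀ X Y : V, nablaJ nabla J X Y = 0 :=
  stmt11_general α ε hα hαε J hJ2 g hgsymm hgnd hJg nabla Xact hcompat hnearly
end

section
/- Let (M,J,g) be any (J²=±1)-metric manifold. If the Levi-Civita connection satisfies the Codazzi condition (∇ᵍ_X J)Y - (∇ᵍ_Y J)X = 0 for all vector fields X,Y, then ∇ᵍJ = 0, i.e., (M,J,g) is a Kähler type manifold. -/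
/- Abstract algebraic model of a `(J² = ±1)`-metric manifold:
`V` plays the role of the module of (smooth) vector fields (an `ℝ`-vector space),
`F` plays the role of the ring of smooth functions (an `ℝ`-algebra),
`g : V →ₗ[ℝ] V →ₗ[ℝ] F` the metric, `J : V →ₗ[ℝ] V` the almost (para)complex/product
structure, `nabla : V → V →ₗ[ℝ] V` the Levi-Civita connection, `Xact X : F →ₗ[ℝ] F`
the action of the vector field `X` on functions (`Xact X f = X f`), and
`bracket` the Lie bracket of vector fields. -/

variable {V : Type*} [AddCommGroup V] [Module ℝ V]

/-! The tensor `B(X,Y,Z) = g((∇_X J)Y, JZ)` is symmetric in `X, Y` by the Codazzi condition, and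
differentiating `g(JY,JZ) = ε g(Y,Z)` along `X` shows that it is skew in `Y, Z`. A form that is
symmetric in its first pair and skew in its last pair of arguments vanishes; since `J` is onto
and `g` is nondegenerate, `∇J = 0`. -/

theorem eq_zero_of_symm_of_antisymm {ι M : Type*} [AddCommGroup M] [Module ℝ M]
    {B : ι → ι → ι → M} (hsymm : ∀ x y z, B x y z = B y x z)
    (hanti : ∀ x y z, B x y z = -B x z y) (x y z : ι) : B x y z = 0 := by
  have hneg : B x y z = -B x y z :=
    calc B x y z = -B z x y := by rw [hanti, hsymm]
      _ = B y z x := by rw [hanti, neg_neg, hsymm]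
      _ = -B x y z := by rw [hanti, hsymm]
  have htwice : (2 : ℝ) • B x y z = 0 := by
    rw [two_smul]
    nth_rewrite 2 [hneg]
    exact add_neg_cancel _
  simpa using htwice

theorem metric_nablaJ_add_metric_nablaJ_eq_zero {F : Type*} [AddCommGroup F] [Module ℝ F]
    {ε : ℝ} {J : V →ₗ[ℝ] V} {g : V →ₗ[ℝ] V →ₗ[ℝ] F}
    (hJg : ∀ x y, g (J x) (J y) = ε • g x y)
    {nabla : V → V →ₗ[ℝ] V} {Xact : V → F →ₗ[ℝ] F}
    (hcompat : ∀ X Y Z : V, Xact X (g Y Z) = g (nabla X Y) Z + g Y (nabla X Z)) (X Y Z : V) :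
    g (nablaJ nabla J X Y) (J Z) + g (J Y) (nablaJ nabla J X Z) = 0 := by
  have hdiff : Xact X (g (J Y) (J Z)) = ε • Xact X (g Y Z) := by
    rw [hJg, map_smul]
  rw [hcompat, hcompat] at hdiff
  simp only [nablaJ, map_sub, LinearMap.sub_apply, hJg] at hdiff ⊢
  linear_combination (norm := module) hdiff

theorem stmt14_general {F : Type*} [CommRing F] [Algebra ℝ F]
    (α ε : ℝ) (hα : α = 1 ∨ α = -1)
    (J : V →ₗ[ℝ] V) (hJ2 : ∀ x, J (J x) = α • x)
    (g : V →ₗ[ℝ] V →ₗ[ℝ] F) (hgsymm : ∀ x y, g x y = g y x)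
    (hgnd : ∀ x : V, (∀ y : V, g x y = 0) → x = 0)
    (hJg : ∀ x y, g (J x) (J y) = ε • g x y)
    (nabla : V → V →ₗ[ℝ] V) (Xact : V → F →ₗ[ℝ] F)
    (hcompat : ∀ X Y Z : V, Xact X (g Y Z) = g (nabla X Y) Z + g Y (nabla X Z))
    (hcod : ∀ X Y : V, nablaJ nabla J X Y - nablaJ nabla J Y X = 0) :
    ∀ X Y : V, nablaJ nabla J X Y = 0 := by
  have hB : ∀ X Y Z, g (nablaJ nabla J X Y) (J Z) = 0 := by
    refine eq_zero_of_symm_of_antisymm (fun X Y Z => ?_) (fun X Y Z => ?_)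
    · rw [sub_eq_zero.mp (hcod X Y)]
    · rw [eq_neg_iff_add_eq_zero, ← hgsymm (J Y)]
      exact metric_nablaJ_add_metric_nablaJ_eq_zero hJg hcompat X Y Z
  have hα0 : α ≠ 0 := by rcases hα with rfl | rfl <;> norm_num
  intro X Y
  refine hgnd _ fun W => ?_
  obtain ⟨Z, rfl⟩ : ∃ Z, J Z = W := ⟨α⁻¹ • J W, by simp [hJ2, smul_smul, hα0]⟩
  exact hB X Y Z

/-- If the Levi-Civita connection of a `(J²=±1)`-metric manifold satisfies the Codazzi
condition `(∇ᵍ_X J)Y - (∇ᵍ_Y J)X = 0`, then `∇ᵍJ = 0` (Kähler type). -/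
theorem stmt14 {F : Type*} [CommRing F] [Algebra ℝ F]
    (α ε : ℝ) (hα : α = 1 ∨ α = -1) (hε : ε = 1 ∨ ε = -1)
    (J : V →ₗ[ℝ] V) (hJ2 : ∀ x, J (J x) = α • x)
    (g : V →ₗ[ℝ] V →ₗ[ℝ] F) (hgsymm : ∀ x y, g x y = g y x)
    (hgnd : ∀ x : V, (∀ y : V, g x y = 0) → x = 0)
    (hJg : ∀ x y, g (J x) (J y) = ε • g x y)
    (nabla : V → V →ₗ[ℝ] V) (Xact : V → F →ₗ[ℝ] F)
    (hcompat : ∀ X Y Z : V, Xact X (g Y Z) = g (nabla X Y) Z + g Y (nabla X Z))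
    (hcod : ∀ X Y : V, nablaJ nabla J X Y - nablaJ nabla J Y X = 0) :
    ∀ X Y : V, nablaJ nabla J X Y = 0 :=
  stmt14_general α ε hα J hJ2 g hgsymm hgnd hJg nabla Xact hcompat hcod
end

section
/- Let V be a real vector space with nondegenerate symmetric bilinear form g and endomorphism J with J² = αId, g(Jx,Jy) = εg(x,y), αε = 1. If a trilinear form φ(x,y,z) satisfies φ(x,y,z) = φ(x,z,y), φ(x,Jy,z) = -φ(x,y,Jz), and the total antisymmetrization condition φ(x,y,z) = φ(y,x,z) (Codazzi symmetry in the first two arguments), then φ = 0. -/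
/-!
Moving `J` across slots: symmetry in the first two arguments together with the anti-commutation
in the last two gives `φ (J a) b c = -φ a b (J c)`. Evaluating `φ (J y) (J y) z` by pushing both
copies of `J` into the third slot gives `α φ(y, y, z)`, while first swapping `J y` into the third
slot gives `-α φ(y, y, z)`; as `α ≠ 0` the diagonal `φ(y, y, z)` vanishes, and polarization in the
first two (symmetric) arguments kills `φ`.
-/

theorem LinearMap.IsAlt.eq_zero_of_symm {R M N : Type*} [CommSemiring R] [AddCommMonoid M]
    [Module R M] [AddCommGroup N] [Module R N] [IsAddTorsionFree N] {B : M →ₗ[R] M →ₗ[R] N}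
    (H : B.IsAlt) (hB : ∀ x y, B x y = B y x) : B = 0 := by
  ext x y
  exact self_eq_neg.mp ((hB x y).trans (H.neg x y).symm)

section

variable {R V : Type*} [CommRing R] [AddCommGroup V] [Module R V]
  {φ : V →ₗ[R] V →ₗ[R] V →ₗ[R] R} {J : V →ₗ[R] V}

theorem apply_J_left_eq_neg_apply_J_right (h2 : ∀ x y z, φ x (J y) z = -φ x y (J z))
    (h3 : ∀ x y z, φ x y z = φ y x z) (a b c : V) : φ (J a) b c = -φ a b (J c) := by
  rw [h3, h2, h3]

theorem apply_self_self_eq_zero [IsDomain R] [CharZero R] {α : R} (hα : α ≠ 0)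
    (hJ2 : ∀ x, J (J x) = α • x) (h1 : ∀ x y z, φ x y z = φ x z y)
    (h2 : ∀ x y z, φ x (J y) z = -φ x y (J z)) (h3 : ∀ x y z, φ x y z = φ y x z) (y z : V) :
    φ y y z = 0 := by
  have hJ := apply_J_left_eq_neg_apply_J_right h2 h3
  have via_right : φ (J y) (J y) z = α * φ y y z := by
    rw [hJ, h2, hJ2, map_smul, smul_eq_mul, neg_neg]
  have via_left : φ (J y) (J y) z = -(α * φ y y z) := by
    rw [h1, h3, h2, hJ2, map_smul, smul_eq_mul, h3 z, h1 y z]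
  have hαφ : α * φ y y z = 0 := self_eq_neg.mp (via_right.symm.trans via_left)
  exact (mul_eq_zero.mp hαφ).resolve_left hα

end

theorem stmt17_general {V : Type*} [AddCommGroup V] [Module ℝ V]
    (J : V →ₗ[ℝ] V) (α : ℝ)
    (hα : α = 1 ∨ α = -1)
    (hJ2 : ∀ x, J (J x) = α • x)
    (φ : V →ₗ[ℝ] V →ₗ[ℝ] V →ₗ[ℝ] ℝ)
    (h1 : ∀ x y z, φ x y z = φ x z y)
    (h2 : ∀ x y z, φ x (J y) z = -φ x y (J z))
    (h3 : ∀ x y z, φ x y z = φ y x z) :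
    ∀ x y z, φ x y z = 0 := by
  have hα0 : α ≠ 0 := by rcases hα with rfl | rfl <;> norm_num
  intro x y z
  let φz : V →ₗ[ℝ] V →ₗ[ℝ] ℝ := φ.compr₂ (LinearMap.applyₗ z)
  have hφz : φz = 0 :=
    LinearMap.IsAlt.eq_zero_of_symm (fun y ↦ apply_self_self_eq_zero hα0 hJ2 h1 h2 h3 y z)
      (fun x y ↦ h3 x y z)
  exact LinearMap.congr_fun₂ hφz x y

/-- Pointwise core of the Kähler-Codazzi theorem in the case `αε = 1`: a trilinear
form symmetric in its last two arguments, anti-commuting with `J` in the last two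
slots, and symmetric in its first two arguments, vanishes identically. -/
theorem stmt17 {V : Type*} [AddCommGroup V] [Module ℝ V]
    (g : V →ₗ[ℝ] V →ₗ[ℝ] ℝ) (hgsymm : ∀ x y, g x y = g y x)
    (hgnd : ∀ x : V, (∀ y : V, g x y = 0) → x = 0)
    (J : V →ₗ[ℝ] V) (α ε : ℝ)
    (hα : α = 1 ∨ α = -1) (hε : ε = 1 ∨ ε = -1) (hαε : α * ε = 1)
    (hJ2 : ∀ x, J (J x) = α • x)
    (hJg : ∀ x y, g (J x) (J y) = ε * g x y)
    (φ : V →ₗ[ℝ] V →ₗ[ℝ] V →ₗ[ℝ] ℝ)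
    (h1 : ∀ x y z, φ x y z = φ x z y)
    (h2 : ∀ x y z, φ x (J y) z = -φ x y (J z))
    (h3 : ∀ x y z, φ x y z = φ y x z) :
    ∀ x y z, φ x y z = 0 :=
  stmt17_general J α hα hJ2 φ h1 h2 h3
end
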